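/- Let G = F₃ × F₃ where F₃ is the free group of rank 3, and let X be a finite set generating ℤ³ as a monoid. Then the word problem of ℤ³ with respect to X is not accepted by any deterministic G-automaton over X. -/

import Mathlib

/-- A monoid `M` has *unique left inverses* if whenever `b * a = 1 = c * a` we have `b = c`. -/
def UniqueLeftInverses (M : Type) [Monoid M] : Prop :=
  ∀ a b c : M, b * a = 1 → c * a = 1 → b = c

/-- The word problem of a group `H`, generated as a monoid by the image of `φ : X → H`,
is the set of words over `X` representing the identity of `H`. -/
def wordProblem {H : Type} [Group H] {X : Type} (φ : X → H) : Set (List X) :=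
  {w | (w.map φ).prod = 1}

/-- A deterministic `M`-automaton over the alphabet `X`: a finite directed graph with
a distinguished initial state, a set of terminal states, and edges labelled by pairs in
`M × X`, such that each state has at most one outgoing edge per letter of `X`. -/
structure DetMAutomaton (M : Type) [Monoid M] (X : Type) where
  State : Type
  [stateFintype : Fintype State]
  init : State
  terminal : Set State
  edge : State → M × X → State → Prop
  det : ∀ ⦃p : State⦄ ⦃x : X⦄ ⦃g h : M⦄ ⦃q r : State⦄,
      edge p (g, x) q → edge p (h, x) r → g = h ∧ q = r

namespace DetMAutomaton

variable {M : Type} [Monoid M] {X : Type}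

/-- `A.Path p m w q` means there is a path from `p` to `q` labelled `(m, w)`: the
`X`-components of its edge labels spell out `w` in order, and the `M`-components
multiply in order to `m`. -/
inductive Path (A : DetMAutomaton M X) : A.State → M → List X → A.State → Prop
  | nil (p : A.State) : Path A p 1 [] p
  | cons {p q r : A.State} {g h : M} {x : X} {w : List X} :
      A.edge p (g, x) q → Path A q h w r → Path A p (g * h) (x :: w) r

/-- The language accepted by a deterministic `M`-automaton: all words `w` such that some
path labelled `(1, w)` leads from the initial state to a terminal state. -/
def Lang (A : DetMAutomaton M X) : Set (List X) :=
  {w | ∃ q ∈ A.terminal, A.Path A.init 1 w q}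

/-- A deterministic `M`-automaton is *deterministic terminal state minimal* (DTSM) if no
deterministic `M`-automaton accepting the same language has strictly fewer terminal states. -/
def DTSM (A : DetMAutomaton M X) : Prop :=
  ∀ B : DetMAutomaton M X, B.Lang = A.Lang → Nat.card A.terminal ≤ Nat.card B.terminal

end DetMAutomaton

/-!
Every word is a prefix of a word representing `1`, so every word can be read from the initial
state. At a reachable state `q` the loops form a monoid with two homomorphisms, the label in
`F₃ × F₃` and the value in `ℤ³`, and determinism forces them to have the same fibres. Hence the
labels of loops commute; commuting elements of a free group lie in a cyclic subgroup, so the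
labels, and with them the values, factor injectively through `ℤ²`. On the other hand, taking
idempotent powers in the finite transition monoid produces a loop that stays a loop after
inserting a positive power of a word for each basis vector of `ℤ³`, and three such independent
directions cannot survive in `ℤ²`.
-/

theorem exists_isIdempotentElem_pow {M : Type*} [Monoid M] [Finite M] (a : M) :
    ∃ n, 0 < n ∧ IsIdempotentElem (a ^ n) := by
  obtain ⟨i, j, hne, hij⟩ := Finite.exists_ne_map_eq_of_infinite (a ^ · : ℕ → M)
  wlog hlt : i < j generalizing i j
  · exact this j i hne.symm hij.symm (hne.lt_or_gt.resolve_left hlt)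
  obtain ⟨p, rfl⟩ := Nat.exists_eq_add_of_lt hlt
  have periodic : ∀ t, a ^ (i + t * (p + 1)) = a ^ i := by
    intro t
    induction t with
    | zero => simp
    | succ t ih =>
      rw [add_one_mul, ← add_assoc, pow_add, ih, ← pow_add, ← add_assoc]
      exact hij.symm
  obtain ⟨r, hr⟩ : ∃ r, (i + 1) * (p + 1) = i + r := ⟨i * p + p + 1, by ring⟩
  refine ⟨(i + 1) * (p + 1), by positivity, ?_⟩
  calc a ^ ((i + 1) * (p + 1)) * a ^ ((i + 1) * (p + 1))
      = a ^ r * a ^ (i + (i + 1) * (p + 1)) := by rw [← pow_add, ← pow_add]; congr 1; omega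
    _ = a ^ ((i + 1) * (p + 1)) := by rw [periodic, ← pow_add, hr, add_comm]

theorem map_prod_ofFn_pow_div {L C : Type*} [Monoid L] [CommGroup C] (χ : L →* C) {n : ℕ}
    (l : L) (l' : Fin n → L) (a b : Fin n → ℕ) :
    χ ((List.ofFn fun i => l' i ^ a i).prod * l ^ ∑ i, b i) /
        χ ((List.ofFn fun i => l' i ^ b i).prod * l ^ ∑ i, a i) =
      ∏ i, (χ (l' i) / χ l) ^ ((a i : ℤ) - b i) := by
  have term (x y : C) (i : Fin n) :
      (x / y) ^ ((a i : ℤ) - b i) = x ^ a i * y ^ b i / (x ^ b i * y ^ a i) := by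
    simp only [zpow_sub, zpow_natCast, div_eq_mul_inv, mul_pow, inv_pow, mul_inv, inv_inv]
    ac_rfl
  simp only [map_mul, map_pow, map_list_prod, List.map_ofFn, Function.comp_def, List.prod_ofFn,
    term, Finset.prod_div_distrib, Finset.prod_mul_distrib, Finset.prod_pow_eq_pow_sum]

theorem exists_zpow_relation_of_factor {L C V : Type*} [Monoid L] [CommGroup C] [AddCommGroup V]
    [Module.Finite ℤ V] {n : ℕ} (hn : Module.finrank ℤ V < n) (π : L →* C)
    (Ξ : L →* Multiplicative V) (hΞ : ∀ l l', Ξ l = Ξ l' → π l = π l') (l : L) (l' : Fin n → L) :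
    ∃ c : Fin n → ℤ, c ≠ 0 ∧ ∏ i, (π (l' i) / π l) ^ c i = 1 := by
  have hdep : ¬ LinearIndependent ℤ fun i => (Ξ (l' i)).toAdd - (Ξ l).toAdd := fun h => by
    simpa using h.fintype_card_le_finrank.trans_lt hn
  obtain ⟨c, hc, i, hi⟩ := Fintype.not_linearIndependent_iff.1 hdep
  have hsplit : ∀ i, c i = ((c i).toNat : ℤ) - (-c i).toNat := fun i => by omega
  refine ⟨c, fun h => hi (by simp [h]), ?_⟩
  have hΞ' := map_prod_ofFn_pow_div Ξ l l' (fun i => (c i).toNat) (fun i => (-c i).toNat)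
  have hπ := map_prod_ofFn_pow_div π l l' (fun i => (c i).toNat) (fun i => (-c i).toNat)
  simp only [← hsplit] at hΞ' hπ
  rw [← hπ, div_eq_one]
  refine hΞ _ _ (div_eq_one.1 (hΞ'.trans (Multiplicative.toAdd.injective ?_)))
  simpa [toAdd_prod, toAdd_zpow] using hc

theorem IsFreeGroup.subsingleton_generators {G : Type*} [Group G] [IsFreeGroup G]
    [IsMulCommutative G] : Subsingleton (IsFreeGroup.Generators G) := by
  classical
  refine ⟨fun s t => by_contra fun hst => ?_⟩
  let f : G →* Equiv.Perm (Fin 3) :=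
    IsFreeGroup.lift fun u => if u = s then Equiv.swap 0 1 else Equiv.swap 1 2
  have hcomm := congrArg f (mul_comm' (IsFreeGroup.of s) (IsFreeGroup.of t))
  simp only [f, map_mul, IsFreeGroup.lift_of] at hcomm
  rw [if_pos trivial, if_neg (Ne.symm hst)] at hcomm
  exact absurd hcomm (by decide)

theorem IsFreeGroup.exists_injective_hom_int {G : Type*} [Group G] [IsFreeGroup G]
    [IsMulCommutative G] : ∃ ψ : G →* Multiplicative ℤ, Function.Injective ψ := by
  have := subsingleton_generators (G := G)
  let e := IsFreeGroup.toFreeGroup G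
  cases isEmpty_or_nonempty (IsFreeGroup.Generators G)
  · exact ⟨1, fun a b _ => e.injective (Subsingleton.elim _ _)⟩
  · have := uniqueOfSubsingleton (Classical.arbitrary (IsFreeGroup.Generators G))
    exact ⟨(e.trans FreeGroup.mulEquivIntOfUnique).toMonoidHom,
      (e.trans FreeGroup.mulEquivIntOfUnique).injective⟩

theorem exists_hom_int_of_commute {L F : Type*} [Monoid L] [Group F] [IsFreeGroup F] (f : L →* F)
    (hf : ∀ l l', Commute (f l) (f l')) :
    ∃ ξ : L →* Multiplicative ℤ, ∀ l l', ξ l = ξ l' → f l = f l' := by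
  let K := Subgroup.closure (Set.range f)
  have : IsMulCommutative K := Subgroup.isMulCommutative_closure <| by
    rintro _ ⟨l, rfl⟩ _ ⟨l', rfl⟩
    exact hf l l'
  obtain ⟨ψ, hψ⟩ := IsFreeGroup.exists_injective_hom_int (G := K)
  refine ⟨ψ.comp (f.codRestrict K fun l => Subgroup.subset_closure ⟨l, rfl⟩), fun l l' h => ?_⟩
  exact congrArg Subtype.val (hψ h)

theorem exists_hom_intProd_of_commute {L F₁ F₂ : Type*} [Monoid L] [Group F₁] [IsFreeGroup F₁]
    [Group F₂] [IsFreeGroup F₂] (f : L →* F₁ × F₂) (hf : ∀ l l', Commute (f l) (f l')) :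
    ∃ Ξ : L →* Multiplicative (ℤ × ℤ), ∀ l l', Ξ l = Ξ l' → f l = f l' := by
  obtain ⟨ξ₁, hξ₁⟩ := exists_hom_int_of_commute ((MonoidHom.fst F₁ F₂).comp f)
    fun l l' => congrArg Prod.fst (hf l l')
  obtain ⟨ξ₂, hξ₂⟩ := exists_hom_int_of_commute ((MonoidHom.snd F₁ F₂).comp f)
    fun l l' => congrArg Prod.snd (hf l l')
  refine ⟨(MulEquiv.prodMultiplicative ℤ ℤ).symm.toMonoidHom.comp (ξ₁.prod ξ₂),
    fun l l' h => ?_⟩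
  have h' := congrArg (MulEquiv.prodMultiplicative ℤ ℤ) h
  simp only [MonoidHom.comp_apply, MulEquiv.toMonoidHom_eq_coe, MonoidHom.coe_coe,
    MulEquiv.apply_symm_apply, MonoidHom.prod_apply, Prod.mk.injEq] at h'
  exact Prod.ext (hξ₁ l l' h'.1) (hξ₂ l l' h'.2)

attribute [instance] DetMAutomaton.stateFintype

namespace DetMAutomaton

variable {M X : Type}

section Monoid

variable [Monoid M] (A : DetMAutomaton M X) {H : Type} [Group H] {φ : X → H}

theorem Path.exists_of_append {p r : A.State} {g : M} {u v : List X}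
    (h : A.Path p g (u ++ v) r) : ∃ q g₁ g₂, A.Path p g₁ u q ∧ A.Path q g₂ v r ∧ g = g₁ * g₂ := by
  induction u generalizing p g with
  | nil => exact ⟨p, 1, g, .nil p, h, (one_mul g).symm⟩
  | cons x u ih =>
    obtain _ | ⟨e, h'⟩ := h
    obtain ⟨q, g₁, g₂, h₁, h₂, rfl⟩ := ih h'
    exact ⟨q, _, g₂, .cons e h₁, h₂, (mul_assoc _ _ _).symm⟩

open Classical in
/-- Completes `A` by a label-`1` self-loop wherever an edge is missing, so that `target` and
`label` below are total and multiplicative. -/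
noncomputable def step (p : A.State) (x : X) : M × A.State :=
  if h : ∃ e : M × A.State, A.edge p (e.1, x) e.2 then h.choose else (1, p)

noncomputable def target : A.State → List X → A.State
  | p, [] => p
  | p, x :: w => target (A.step p x).2 w

noncomputable def label : A.State → List X → M
  | _, [] => 1
  | p, x :: w => (A.step p x).1 * label (A.step p x).2 w

theorem target_append (p : A.State) (u v : List X) :
    A.target p (u ++ v) = A.target (A.target p u) v := by
  induction u generalizing p with
  | nil => rfl
  | cons x u ih => exact ih _

theorem label_append (p : A.State) (u v : List X) :
    A.label p (u ++ v) = A.label p u * A.label (A.target p u) v := by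
  induction u generalizing p with
  | nil => exact (one_mul _).symm
  | cons x u ih => simp only [List.cons_append, label, target, ih, mul_assoc]

theorem Path.eq_label_target {p q : A.State} {g : M} {w : List X} (h : A.Path p g w q) :
    g = A.label p w ∧ q = A.target p w := by
  induction h with
  | nil => exact ⟨rfl, rfl⟩
  | @cons p q' r g h x w e _ ih =>
    have hex : ∃ e : M × A.State, A.edge p (e.1, x) e.2 := ⟨(g, q'), e⟩
    have hstep : A.step p x = (g, q') := by
      rw [step, dif_pos hex]
      obtain ⟨h₁, h₂⟩ := A.det hex.choose_spec e
      exact Prod.ext h₁ h₂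
    simp only [label, target, hstep, ih.1, ih.2, and_self]

/-- Reading `u * v` applies `u` first, hence the opposite monoid. -/
noncomputable def transition : FreeMonoid X →* (Function.End A.State)ᵐᵒᵖ where
  toFun w := .op fun p => A.target p w.toList
  map_one' := rfl
  map_mul' u v := MulOpposite.unop_injective <| funext fun p => A.target_append p u.toList v.toList

def loops (q : A.State) : Submonoid (FreeMonoid X) where
  carrier := {w | A.target q w.toList = q}
  one_mem' := rfl
  mul_mem' {u v} (hu : A.target q u.toList = q) (hv : A.target q v.toList = q) := by
    change A.target q (u * v).toList = q
    rw [FreeMonoid.toList_mul, target_append, hu, hv]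

noncomputable def loopLabel (q : A.State) : A.loops q →* M where
  toFun l := A.label q l.1.toList
  map_one' := rfl
  map_mul' u v := by
    change A.label q (u.1 * v.1).toList = _
    rw [FreeMonoid.toList_mul, label_append, u.2.out]

theorem loopLabel_apply (q : A.State) (l : A.loops q) : A.loopLabel q l = A.label q l.1.toList :=
  rfl

theorem exists_path_init
    (hgen : ∀ h : H, ∃ w : List X, (w.map φ).prod = h) (hL : A.Lang = wordProblem φ)
    (w : List X) : ∃ g q, A.Path A.init g w q := by
  obtain ⟨z, hz⟩ := hgen (w.map φ).prod⁻¹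
  have hwz : w ++ z ∈ A.Lang := by simp [hL, wordProblem, hz]
  obtain ⟨r, -, hr⟩ := hwz
  obtain ⟨q, g, -, hq, -, -⟩ := hr.exists_of_append
  exact ⟨g, q, hq⟩

theorem mem_lang_iff
    (hgen : ∀ h : H, ∃ w : List X, (w.map φ).prod = h) (hL : A.Lang = wordProblem φ)
    (w : List X) : w ∈ A.Lang ↔ A.label A.init w = 1 ∧ A.target A.init w ∈ A.terminal := by
  constructor
  · rintro ⟨q, hq, h⟩
    obtain ⟨h1, rfl⟩ := h.eq_label_target
    exact ⟨h1.symm, hq⟩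
  · rintro ⟨h1, hT⟩
    obtain ⟨g, q, h⟩ := A.exists_path_init hgen hL w
    obtain ⟨rfl, rfl⟩ := h.eq_label_target
    exact ⟨_, hT, h1 ▸ h⟩

theorem exists_pumpable_loop {n : ℕ} (p : A.State) (w : Fin n → FreeMonoid X) :
    ∃ x : FreeMonoid X, ∃ E ∈ A.loops (A.target p x.toList), ∃ k : Fin n → ℕ, (∀ i, 0 < k i) ∧
      ∀ i, ∃ P S, E = P * S ∧ P * w i ^ k i * S ∈ A.loops (A.target p x.toList) := by
  have : Finite (Function.End A.State)ᵐᵒᵖ := Finite.of_equiv (A.State → A.State) MulOpposite.opEquiv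
  choose k hk hidem using fun i => exists_isIdempotentElem_pow (A.transition (w i))
  set D := (List.ofFn fun i => w i ^ k i).prod
  obtain ⟨m, hm, hD⟩ := exists_isIdempotentElem_pow (A.transition D)
  rw [← map_pow] at hD
  have hloop : D ^ m ∈ A.loops (A.target p (D ^ m).toList) :=
    congrFun (congrArg MulOpposite.unop hD.eq) p
  obtain ⟨m, rfl⟩ := Nat.exists_eq_add_one_of_ne_zero hm.ne'
  refine ⟨D ^ (m + 1), D ^ (m + 1), hloop, k, hk, fun i => ?_⟩
  obtain ⟨s, t, hst⟩ := List.append_of_mem (List.mem_ofFn.2 ⟨i, rfl⟩ :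
    w i ^ k i ∈ List.ofFn fun i => w i ^ k i)
  have hDi : D = s.prod * w i ^ k i * t.prod := by simp [D, hst, mul_assoc]
  have hidem' : ∀ y, A.transition (w i) ^ k i * (A.transition (w i) ^ k i * y) =
      A.transition (w i) ^ k i * y := fun y => by rw [← mul_assoc, (hidem i).eq]
  refine ⟨s.prod * w i ^ k i, t.prod * D ^ m, by rw [pow_succ', hDi]; simp [mul_assoc], ?_⟩
  have ht : A.transition (s.prod * w i ^ k i * w i ^ k i * (t.prod * D ^ m)) =
      A.transition (D ^ (m + 1)) := by
    rw [pow_succ', hDi]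
    simp only [map_mul, map_pow, mul_assoc, hidem']
  exact (congrFun (congrArg MulOpposite.unop ht) _).trans hloop

end Monoid

section Group

variable [Group M] (A : DetMAutomaton M X) {H : Type} [Group H] {φ : X → H}

theorem label_eq_label_iff (hgen : ∀ h : H, ∃ w : List X, (w.map φ).prod = h)
    (hL : A.Lang = wordProblem φ) {u u' : List X} (hs : A.target A.init u = A.target A.init u') :
    A.label A.init u = A.label A.init u' ↔ (u.map φ).prod = (u'.map φ).prod := by
  obtain ⟨z, hz⟩ := hgen (u.map φ).prod⁻¹
  have hu : A.label A.init u * A.label (A.target A.init u) z = 1 ∧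
      A.target (A.target A.init u) z ∈ A.terminal := by
    rw [← label_append, ← target_append, ← A.mem_lang_iff hgen hL, hL]
    simp [wordProblem, hz]
  have key : u' ++ z ∈ A.Lang ↔ A.label A.init u' = A.label A.init u := by
    rw [A.mem_lang_iff hgen hL, label_append, target_append, ← hs]
    constructor
    · rintro ⟨h1, -⟩
      exact mul_right_cancel (h1.trans hu.1.symm)
    · intro h
      rwa [h]
  rw [eq_comm, ← key, hL]
  simp [wordProblem, hz, mul_inv_eq_one, eq_comm]

theorem loopLabel_eq_iff (hgen : ∀ h : H, ∃ w : List X, (w.map φ).prod = h)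
    (hL : A.Lang = wordProblem φ) (x : List X) (l l' : A.loops (A.target A.init x)) :
    A.loopLabel _ l = A.loopLabel _ l' ↔ FreeMonoid.lift φ l = FreeMonoid.lift φ l' := by
  have := A.label_eq_label_iff hgen hL (u := x ++ l.1.toList) (u' := x ++ l'.1.toList)
    (by rw [target_append, target_append, l.2.out, l'.2.out])
  simpa [label_append, loopLabel_apply, FreeMonoid.lift_apply] using this

end Group

end DetMAutomaton

theorem DetMAutomaton.exists_zpow_relation_of_lang_eq_wordProblem {F₁ F₂ H X : Type} [Group F₁]
    [IsFreeGroup F₁] [Group F₂] [IsFreeGroup F₂] [CommGroup H] {φ : X → H}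
    (hgen : ∀ h : H, ∃ w : List X, (w.map φ).prod = h) (A : DetMAutomaton (F₁ × F₂) X)
    (hL : A.Lang = wordProblem φ) {n : ℕ} (hn : 2 < n) (h : Fin n → H) :
    ∃ c : Fin n → ℤ, c ≠ 0 ∧ ∏ i, h i ^ c i = 1 := by
  choose w hw using fun i => hgen (h i)
  have hw' (i : Fin n) : FreeMonoid.lift φ (.ofList (w i)) = h i :=
    (FreeMonoid.lift_apply φ _).trans (hw i)
  obtain ⟨x, E, hE, k, hk, hE'⟩ := A.exists_pumpable_loop A.init fun i => FreeMonoid.ofList (w i)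
  choose P S hPS hloop using hE'
  set q := A.target A.init x.toList
  let π := (FreeMonoid.lift φ).comp (A.loops q).subtype
  have hπ (i : Fin n) : π ⟨_, hloop i⟩ = π ⟨E, hE⟩ * h i ^ k i := by
    change FreeMonoid.lift φ (P i * FreeMonoid.ofList (w i) ^ k i * S i) =
      FreeMonoid.lift φ E * h i ^ k i
    rw [hPS i, map_mul, map_mul, map_mul, map_pow, mul_right_comm, hw']
  have hlabel := A.loopLabel_eq_iff hgen hL x.toList
  obtain ⟨Ξ, hΞ⟩ := exists_hom_intProd_of_commute (A.loopLabel q) fun l l' => by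
    rw [Commute, SemiconjBy, ← map_mul, ← map_mul, hlabel _ _, Submonoid.coe_mul, Submonoid.coe_mul,
      map_mul, map_mul, mul_comm]
  obtain ⟨c, hc, hrel⟩ := exists_zpow_relation_of_factor (by simpa using hn) π Ξ
    (fun l l' h => (hlabel l l').1 (hΞ l l' h)) ⟨E, hE⟩ fun i => ⟨_, hloop i⟩
  refine ⟨fun i => k i * c i, fun h0 => hc (funext fun i => ?_), ?_⟩
  · simpa [(hk i).ne'] using congrFun h0 i
  · simpa [hπ, zpow_mul] using hrel

theorem wordProblem_Z3_not_det_F3xF3_automaton_general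
    {X : Type} (φ : X → Multiplicative (Fin 3 → ℤ))
    (hgen : ∀ h : Multiplicative (Fin 3 → ℤ), ∃ w : List X, (w.map φ).prod = h) :
    ¬ ∃ A : DetMAutomaton (FreeGroup (Fin 3) × FreeGroup (Fin 3)) X,
        A.Lang = wordProblem φ := by
  rintro ⟨A, hL⟩
  obtain ⟨c, hc, hrel⟩ := A.exists_zpow_relation_of_lang_eq_wordProblem hgen hL (by norm_num)
    fun i => Multiplicative.ofAdd (Pi.single i 1)
  refine hc (funext fun i => ?_)
  simpa [toAdd_prod, Pi.single_apply] using congrFun (congrArg Multiplicative.toAdd hrel) i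

/-- The word problem of `ℤ³` (with respect to any finite monoid generating set) is not
accepted by any deterministic `(F₃ × F₃)`-automaton. -/
theorem wordProblem_Z3_not_det_F3xF3_automaton
    {X : Type} [Fintype X] (φ : X → Multiplicative (Fin 3 → ℤ))
    (hgen : ∀ h : Multiplicative (Fin 3 → ℤ), ∃ w : List X, (w.map φ).prod = h) :
    ¬ ∃ A : DetMAutomaton (FreeGroup (Fin 3) × FreeGroup (Fin 3)) X,
        A.Lang = wordProblem φ :=
  wordProblem_Z3_not_det_F3xF3_automaton_general φ hgen
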